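/- Let σ ∈ S_r and λ ⊢ n with n > r. In Young's orthogonal representation ordered by the last-letter order, π^λ(σ)_{i,j} = 0 whenever |i − j| > r!. -/

import Mathlib

open scoped Classical

noncomputable section

/-- A standard Young tableau of shape `μ ⊢ n`: a listing of the cells of `μ`
(`pos i` is the cell containing the entry `i+1`) increasing along rows and columns. -/
structure SYT (μ : YoungDiagram) where
  pos : Fin μ.card → ℕ × ℕ
  inj : Function.Injective pos
  range_eq : ∀ c : ℕ × ℕ, (∃ i, pos i = c) ↔ c ∈ μ
  row_lt : ∀ a b, (pos a).1 = (pos b).1 → (pos a).2 < (pos b).2 → a < b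
  col_lt : ∀ a b, (pos a).2 = (pos b).2 → (pos a).1 < (pos b).1 → a < b

/-- The content of a box `(i, j)` (row `i`, column `j`) is `j − i`. -/
def content (c : ℕ × ℕ) : ℝ := (c.2 : ℝ) - (c.1 : ℝ)

/-- `ρ` is Young's orthogonal representation of `S_{|μ|}` for the shape `μ`, given entrywise
on the basis of standard Young tableaux: it is multiplicative, sends `1` to the identity
matrix, and on an adjacent transposition `(k, k+1)` (labels `a+1, b+1` with `b = a+1`) the
`(T, S)` entry is `1/d_k(T)` if `S = T`, `√(1 − 1/d_k(T)²)` if `S = (k, k+1)T`, and `0`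
otherwise, where `d_k(T)` is the signed content distance between `k` and `k+1` in `T`. -/
def IsYoungOrthogonal (μ : YoungDiagram)
    (ρ : Equiv.Perm (Fin μ.card) → SYT μ → SYT μ → ℝ) : Prop :=
  (∀ T S : SYT μ, ρ 1 T S = if T = S then 1 else 0) ∧
  (∀ σ τ : Equiv.Perm (Fin μ.card), ∀ T S : SYT μ,
    ρ (σ * τ) T S = ∑ᶠ U : SYT μ, ρ σ T U * ρ τ U S) ∧
  (∀ a b : Fin μ.card, (b : ℕ) = (a : ℕ) + 1 → ∀ T S : SYT μ,
    ρ (Equiv.swap a b) T S =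
      if S = T then 1 / (content (T.pos a) - content (T.pos b))
      else if S.pos = T.pos ∘ (Equiv.swap a b) then
        Real.sqrt (1 - 1 / (content (T.pos a) - content (T.pos b)) ^ 2)
      else 0)

/-- The last-letter strict order on standard Young tableaux: `T` precedes `S` if, at the
largest entry whose row differs between the two tableaux, the row index in `T` is larger
(the box lies in a lower row in `T`). -/
def lastLetterLT {μ : YoungDiagram} (T S : SYT μ) : Prop :=
  ∃ k : Fin μ.card, (S.pos k).1 < (T.pos k).1 ∧
    ∀ j : Fin μ.card, k < j → (T.pos j).1 = (S.pos j).1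

/-- The (0-based) index of a standard Young tableau in the last-letter order. -/
def llIndex {μ : YoungDiagram} (T : SYT μ) : ℕ :=
  Nat.card {S : SYT μ // lastLetterLT S T}

/-!
Both `ρ(σ)` for `σ ∈ S_r` and the last-letter order respect the entries `r+1, …, n` of a
tableau. Since `ρ` of an adjacent transposition `(k, k+1)` with `k < r` only links a tableau
to itself or to the tableau with `k` and `k+1` exchanged, `ρ(σ)_{T,S} = 0` unless `T` and `S`
agree on all entries beyond `r`. If they do, a tableau `U` that disagrees with them there is
compared with `T` and with `S` at the same (large) letter, so it precedes both or neither;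
hence the indices of `T` and `S` differ by at most the number of tableaux agreeing with `T`
beyond `r`. Such a tableau fills the same `r` cells with `1, …, r`, so there are at most `r!`.
-/

open Finset Equiv
open scoped Nat

theorem Set.abs_ncard_sub_ncard_le {α : Type*} [Finite α] {P Q A : Set α}
    (hPQ : P ⊆ Q ∪ A) (hQP : Q ⊆ P ∪ A) : |(P.ncard : ℤ) - Q.ncard| ≤ A.ncard := by
  have hP := (Set.ncard_le_ncard hPQ).trans (Set.ncard_union_le Q A)
  have hQ := (Set.ncard_le_ncard hQP).trans (Set.ncard_union_le P A)
  rw [abs_sub_le_iff]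
  constructor <;> omega

theorem Equiv.Perm.viaEmbedding_swap {α β : Type*} [DecidableEq α] [DecidableEq β]
    (f : α ↪ β) (a b : α) : (swap a b).viaEmbedding f = swap (f a) (f b) := by
  ext x
  by_cases hx : x ∈ Set.range f
  · obtain ⟨y, rfl⟩ := hx
    rw [Perm.viaEmbedding_apply, f.injective.swap_apply]
  · rw [Perm.viaEmbedding_apply_of_notMem _ _ _ hx,
      swap_apply_of_ne_of_ne (fun h => hx ⟨a, h.symm⟩) (fun h => hx ⟨b, h.symm⟩)]

section BlockDiagonal

variable {G ι : Type*} [Monoid G] (ρ : G → ι → ι → ℝ) {R : ι → ι → Prop}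

def blockDiagonalSubmonoid (hone : ∀ i j, ρ 1 i j = if i = j then 1 else 0)
    (hmul : ∀ g h i j, ρ (g * h) i j = ∑ᶠ k, ρ g i k * ρ h k j)
    (hrefl : ∀ i, R i i) (htrans : ∀ i j k, R i j → R j k → R i k) : Submonoid G where
  carrier := {g | ∀ i j, ¬ R i j → ρ g i j = 0}
  one_mem' i j hij := by
    rw [hone, if_neg]
    rintro rfl
    exact hij (hrefl i)
  mul_mem' {g h} hg hh i j hij := by
    rw [hmul]
    refine (finsum_congr fun k => ?_).trans finsum_zero
    by_cases hik : R i k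
    · rw [hh k j fun hkj => hij (htrans i k j hik hkj), mul_zero]
    · rw [hg i k hik, zero_mul]

end BlockDiagonal

namespace SYT

variable {μ : YoungDiagram}

theorem pos_mem (U : SYT μ) (i : Fin μ.card) : U.pos i ∈ μ :=
  (U.range_eq _).1 ⟨i, rfl⟩

theorem pos_injective : Function.Injective (pos : SYT μ → Fin μ.card → ℕ × ℕ) := by
  rintro ⟨⟩ ⟨⟩ rfl
  rfl

instance : Finite (SYT μ) :=
  Finite.of_injective (fun U i => (⟨U.pos i, U.pos_mem i⟩ : μ.cells)) fun _ _ h =>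
    pos_injective (funext fun i => congrArg Subtype.val (congrFun h i))

theorem pos_snd_add_card_right_add_one (U : SYT μ) (j : Fin μ.card) :
    (U.pos j).2 + #{k | j < k ∧ (U.pos k).1 = (U.pos j).1} + 1 = μ.rowLen (U.pos j).1 := by
  have hj : (U.pos j).2 < μ.rowLen (U.pos j).1 :=
    YoungDiagram.mem_iff_lt_rowLen.1 (U.pos_mem j)
  suffices #{k | j < k ∧ (U.pos k).1 = (U.pos j).1}
      = #(Ioo (U.pos j).2 (μ.rowLen (U.pos j).1)) by
    rw [this, Nat.card_Ioo]
    omega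
  apply card_bij (fun k _ => (U.pos k).2)
  · intro k hk
    simp only [mem_filter, mem_univ, true_and] at hk
    have hk_mem : (U.pos k).2 < μ.rowLen (U.pos j).1 := by
      rw [← hk.2]; exact YoungDiagram.mem_iff_lt_rowLen.1 (U.pos_mem k)
    refine mem_Ioo.2 ⟨?_, hk_mem⟩
    rcases lt_trichotomy (U.pos k).2 (U.pos j).2 with h | h | h
    · exact absurd (U.row_lt k j hk.2 h) (lt_asymm hk.1)
    · exact absurd (U.inj (Prod.ext hk.2 h)) hk.1.ne'
    · exact h
  · intro k hk k' hk' h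
    simp only [mem_filter, mem_univ, true_and] at hk hk'
    exact U.inj (Prod.ext (hk.2.trans hk'.2.symm) h)
  · intro c hc
    rw [mem_Ioo] at hc
    obtain ⟨k, hk⟩ := (U.range_eq ((U.pos j).1, c)).2
      (YoungDiagram.mem_iff_lt_rowLen.2 hc.2)
    refine ⟨k, mem_filter.2 ⟨mem_univ _, ?_, by rw [hk]⟩, by rw [hk]⟩
    exact U.row_lt j k (by rw [hk]) (by rw [hk]; exact hc.1)

theorem pos_eq_of_forall_fst_eq {U V : SYT μ} {r : ℕ}
    (h : ∀ k : Fin μ.card, r ≤ (k : ℕ) → (U.pos k).1 = (V.pos k).1)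
    {j : Fin μ.card} (hj : r ≤ (j : ℕ)) : U.pos j = V.pos j := by
  have hU := U.pos_snd_add_card_right_add_one j
  have hV := V.pos_snd_add_card_right_add_one j
  have hright : #{k | j < k ∧ (U.pos k).1 = (U.pos j).1}
      = #{k | j < k ∧ (V.pos k).1 = (V.pos j).1} := by
    congr 1
    refine filter_congr fun k _ => and_congr_right fun hjk => ?_
    rw [h k (hj.trans hjk.le), h j hj]
  rw [hright, h j hj] at hU
  exact Prod.ext (h j hj) (by omega)

/-- `T` and `S` place each of the entries `r+1, …, |μ|` (indices `r, …`) in the same cell. -/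
def AgreeFrom (r : ℕ) (T S : SYT μ) : Prop :=
  ∀ j : Fin μ.card, r ≤ (j : ℕ) → T.pos j = S.pos j

theorem AgreeFrom.refl (r : ℕ) (T : SYT μ) : T.AgreeFrom r T :=
  fun _ _ => rfl

theorem AgreeFrom.symm {r : ℕ} {T S : SYT μ} (h : T.AgreeFrom r S) : S.AgreeFrom r T :=
  fun j hj => (h j hj).symm

theorem AgreeFrom.trans {r : ℕ} {T S U : SYT μ} (h₁ : T.AgreeFrom r S) (h₂ : S.AgreeFrom r U) :
    T.AgreeFrom r U :=
  fun j hj => (h₁ j hj).trans (h₂ j hj)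

theorem ncard_agreeFrom_le (T : SYT μ) {r : ℕ} (hr : r ≤ μ.card) :
    {U : SYT μ | U.AgreeFrom r T}.ncard ≤ r ! := by
  let D : Finset (ℕ × ℕ) := univ.image fun i : Fin r => T.pos (Fin.castLE hr i)
  have hD : #D = r := by
    rw [card_image_of_injective (f := fun i : Fin r => T.pos (Fin.castLE hr i)) _
      (T.inj.comp (Fin.castLE_injective hr)), Finset.card_univ, Fintype.card_fin]
  -- the entries `1, …, r` of `U` fill the cells left free by the larger ones, as in `T`
  have mem_D (U : SYT μ) (hU : U.AgreeFrom r T) (i : Fin r) : U.pos (Fin.castLE hr i) ∈ D := by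
    obtain ⟨k, hk⟩ := (T.range_eq _).2 (U.pos_mem (Fin.castLE hr i))
    have hkr : (k : ℕ) < r := by
      by_contra! hrk
      have := congrArg Fin.val (U.inj (hk.symm.trans (hU k hrk).symm))
      simp only [Fin.val_castLE] at this
      omega
    exact mem_image.2 ⟨⟨k, hkr⟩, mem_univ _, hk⟩
  let f : {U : SYT μ | U.AgreeFrom r T} → (Fin r ↪ D) := fun U =>
    ⟨fun i => ⟨U.1.pos (Fin.castLE hr i), mem_D U.1 U.2 i⟩,
      fun _ _ h => Fin.castLE_injective hr (U.1.inj (congrArg Subtype.val h))⟩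
  have hf : Function.Injective f := by
    intro U V h
    refine Subtype.ext (pos_injective (funext fun j => ?_))
    by_cases hj : (j : ℕ) < r
    · exact congrArg Subtype.val (DFunLike.congr_fun h ⟨j, hj⟩)
    · exact (U.2 j (not_lt.1 hj)).trans (V.2 j (not_lt.1 hj)).symm
  calc {U : SYT μ | U.AgreeFrom r T}.ncard = Nat.card {U : SYT μ | U.AgreeFrom r T} :=
        (Nat.card_coe_set_eq _).symm
    _ ≤ Nat.card (Fin r ↪ D) := Nat.card_le_card_of_injective f hf
    _ = r ! := by
      rw [Nat.card_eq_fintype_card, Fintype.card_embedding_eq, Fintype.card_coe, hD,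
        Fintype.card_fin, Nat.descFactorial_self]

theorem lastLetterLT_of_agreeFrom {U T S : SYT μ} {r : ℕ} (hTS : T.AgreeFrom r S)
    (hU : ¬ U.AgreeFrom r T) (h : lastLetterLT U T) : lastLetterLT U S := by
  obtain ⟨k, hlt, hrows⟩ := h
  have hk : r ≤ (k : ℕ) := by
    by_contra! hkr
    exact hU fun j hj => pos_eq_of_forall_fst_eq
      (fun i hi => hrows i (Fin.lt_def.2 (by omega))) hj
  have hrow (j : Fin μ.card) (hj : k ≤ j) : (T.pos j).1 = (S.pos j).1 := by
    rw [hTS j (hk.trans (Fin.le_def.1 hj))]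
  exact ⟨k, hrow k le_rfl ▸ hlt, fun j hj => (hrows j hj).trans (hrow j hj.le)⟩

theorem abs_llIndex_sub_le_factorial {T S : SYT μ} {r : ℕ} (hr : r ≤ μ.card)
    (hTS : T.AgreeFrom r S) : |(llIndex T : ℤ) - llIndex S| ≤ r ! := by
  have hll (V : SYT μ) : llIndex V = {U | lastLetterLT U V}.ncard :=
    Nat.card_coe_set_eq _
  rw [hll, hll]
  refine (Set.abs_ncard_sub_ncard_le (A := {U | U.AgreeFrom r T}) ?_ ?_).trans
    (by exact_mod_cast ncard_agreeFrom_le T hr)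
  · intro U hU
    by_cases hUT : U.AgreeFrom r T
    · exact Or.inr hUT
    · exact Or.inl (lastLetterLT_of_agreeFrom hTS hUT hU)
  · intro U hU
    by_cases hUT : U.AgreeFrom r T
    · exact Or.inr hUT
    · exact Or.inl (lastLetterLT_of_agreeFrom hTS.symm (fun h => hUT (h.trans hTS.symm)) hU)

end SYT

namespace IsYoungOrthogonal

variable {μ : YoungDiagram} {ρ : Perm (Fin μ.card) → SYT μ → SYT μ → ℝ}

theorem agreeFrom_of_swap_apply_ne_zero (hρ : IsYoungOrthogonal μ ρ) {a b : Fin μ.card}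
    (hab : (b : ℕ) = a + 1) {r : ℕ} (hbr : (b : ℕ) < r) {T S : SYT μ}
    (h : ρ (swap a b) T S ≠ 0) : T.AgreeFrom r S := by
  intro j hj
  rw [hρ.2.2 a b hab T S] at h
  split_ifs at h with hST hswap
  · rw [hST]
  · have hja : j ≠ a := fun h => by subst h; omega
    have hjb : j ≠ b := fun h => by subst h; omega
    rw [hswap, Function.comp_apply, swap_apply_of_ne_of_ne hja hjb]
  · exact absurd rfl h

theorem agreeFrom_of_apply_ne_zero (hρ : IsYoungOrthogonal μ ρ) {r : ℕ} (hr : r ≤ μ.card)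
    (σ : Perm (Fin r)) {T S : SYT μ} (h : ρ (σ.viaEmbedding (Fin.castLEEmb hr)) T S ≠ 0) :
    T.AgreeFrom r S := by
  let B := blockDiagonalSubmonoid ρ hρ.1 hρ.2.1 (SYT.AgreeFrom.refl r)
    fun _ _ _ => SYT.AgreeFrom.trans
  suffices hσ : σ ∈ B.comap (Perm.viaEmbeddingHom (Fin.castLEEmb hr)) by
    by_contra hTS
    exact h (hσ T S hTS)
  cases r with
  | zero => exact Subsingleton.elim σ 1 ▸ one_mem _
  | succ r =>
    have hgen : Submonoid.closure (Set.range fun i : Fin r => swap i.castSucc i.succ)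
        ≤ B.comap (Perm.viaEmbeddingHom (Fin.castLEEmb hr)) := by
      rw [Submonoid.closure_le]
      rintro _ ⟨i, rfl⟩ U V hUV
      by_contra hne
      simp only [Perm.viaEmbeddingHom_apply, Perm.viaEmbedding_swap] at hne
      exact hUV (hρ.agreeFrom_of_swap_apply_ne_zero (by simp) (by simp) hne)
    exact hgen (Perm.mclosure_swap_castSucc_succ r ▸ Submonoid.mem_top σ)

end IsYoungOrthogonal

/-- Let `σ ∈ S_r` and `λ ⊢ n` with `n > r`.  In Young's orthogonal representation ordered by
the last-letter order, `π^λ(σ)_{i,j} = 0` whenever `|i − j| > r!`. -/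
theorem stmt11 (lam : YoungDiagram)
    (ρ : Equiv.Perm (Fin lam.card) → SYT lam → SYT lam → ℝ)
    (hρ : IsYoungOrthogonal lam ρ)
    (n r : ℕ) (hn : lam.card = n) (hrn : r < n)
    (σ : Equiv.Perm (Fin r)) (T S : SYT lam)
    (hfar : (r.factorial : ℤ) < |(llIndex T : ℤ) - (llIndex S : ℤ)|) :
    ρ (σ.viaEmbedding (Fin.castLEEmb (show r ≤ lam.card by omega))) T S = 0 := by
  by_contra h
  exact hfar.not_ge (SYT.abs_llIndex_sub_le_factorial (by omega)
    (hρ.agreeFrom_of_apply_ne_zero (by omega) σ h))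

end
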